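/- Let G be an inverse semigroup, H' ⊆ G a finite sub-inverse semigroup, and A a G-algebra; let c₀(G_H/H) be the C*-algebra of complex-valued functions on the discrete set G_H/H vanishing at infinity, with pointwise operations, and let δ_{[h]} denote the characteristic function of the class of h ∈ G_H. Then: (1) if h, h' ∈ G_H with h ≡ h' and g ∈ G, then g·h ∈ G_H if and only if g·h' ∈ G_H, and in that case g·h ≡ g·h'; (2) for each g ∈ G there is a (unique) bounded *-endomorphism β_g of c₀(G_H/H) with β_g(δ_{[h]}) = [g·h ∈ G_H]·δ_{[g·h]} for all h ∈ G_H; (3) g ↦ β_g is a semigroup homomorphism and satisfies β_{g g*}(x)·y = x·β_{g g*}(y) for all x, y ∈ c₀(G_H/H) and g ∈ G, i.e., it makes c₀(G_H/H) a G-algebra. -/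

import Mathlib

/-! Common setup: inverse semigroups, G-algebras, and the universal *-algebra 𝔽(G,A). -/

noncomputable section

/-- An inverse semigroup: a semigroup in which every element `g` has a unique
generalized inverse, denoted `star g`. -/
class InverseSemigroup (G : Type*) extends Semigroup G, Star G where
  mul_star_mul_self : ∀ g : G, g * star g * g = g
  star_mul_self_mul_star : ∀ g : G, star g * g * star g = star g
  star_unique : ∀ g h : G, g * h * g = g → h * g * h = h → h = star g

namespace Green

/-! ### The free complex *-algebra on a set of generators

The free complex *-algebra on a set `Y` is realized as the monoid algebra of the free
monoid on the letters `Y × Bool` (a generator together with a formal star flag); its star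
operation conjugates coefficients, reverses words and flips the star flags. -/

/-- The free complex *-algebra on the set `Y`. -/
abbrev FreeStar (Y : Type*) := MonoidAlgebra ℂ (FreeMonoid (Y × Bool))

namespace FreeStar

variable {Y : Type*}

/-- Star of a word: reverse it and flip all star flags. -/
def wordStar (w : FreeMonoid (Y × Bool)) : FreeMonoid (Y × Bool) :=
  FreeMonoid.ofList (((FreeMonoid.toList w).map fun x => (x.1, !x.2)).reverse)

lemma wordStar_mul (v w : FreeMonoid (Y × Bool)) :
    wordStar (v * w) = wordStar w * wordStar v := by
  simp [wordStar, FreeMonoid.toList_mul]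

lemma wordStar_wordStar (w : FreeMonoid (Y × Bool)) : wordStar (wordStar w) = w := by
  simp [wordStar, List.map_reverse, List.map_map, Function.comp_def]

/-- The star operation on the free complex *-algebra, as an additive map. -/
def starAux : FreeStar Y →+ FreeStar Y :=
  MonoidAlgebra.coeffAddEquiv.symm.toAddMonoidHom.comp <|
  ((Finsupp.mapDomain.addMonoidHom wordStar).comp
    (Finsupp.mapRange.addMonoidHom (starRingEnd ℂ).toAddMonoidHom)).comp
    MonoidAlgebra.coeffAddEquiv.toAddMonoidHom

lemma starAux_apply (f : FreeStar Y) :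
    starAux f = MonoidAlgebra.ofCoeff
      (Finsupp.mapDomain wordStar (Finsupp.mapRange (starRingEnd ℂ) (map_zero _) f.coeff)) :=
  rfl

lemma starAux_single (w : FreeMonoid (Y × Bool)) (c : ℂ) :
    starAux (MonoidAlgebra.single w c) = MonoidAlgebra.single (wordStar w) (starRingEnd ℂ c) := by
  rw [starAux_apply]
  simp only [MonoidAlgebra.single, MonoidAlgebra.coeff_ofCoeff, Finsupp.mapRange_single,
    Finsupp.mapDomain_single]

instance instStarRing : StarRing (FreeStar Y) where
  star := starAux
  star_involutive := by
    intro f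
    induction f using MonoidAlgebra.induction_linear with
    | zero => simp
    | add f g hf hg => simp_all [map_add]
    | single w c => simp [starAux_single, wordStar_wordStar, starRingEnd_self_apply]
  star_mul := by
    intro f g
    show starAux (f * g) = starAux g * starAux f
    induction f using MonoidAlgebra.induction_linear with
    | zero => simp
    | add f f' hf hf' => simp [mul_add, add_mul, map_add, hf, hf']
    | single w c =>
      induction g using MonoidAlgebra.induction_linear with
      | zero => simp
      | add g g' hg hg' => simp [mul_add, add_mul, map_add, hg, hg']
      | single v d =>
        simp only [MonoidAlgebra.single_mul_single, starAux_single, wordStar_mul, map_mul]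
        rw [mul_comm]
  star_add := map_add _

end FreeStar

section GAlgebra

variable {G : Type*} [InverseSemigroup G]
variable {A : Type*} [NonUnitalNormedRing A] [StarRing A] [CStarRing A] [NormedSpace ℂ A]
  [IsScalarTower ℂ A A] [SMulCommClass ℂ A A] [StarModule ℂ A] [CompleteSpace A]

/-- `α` is an action of the inverse semigroup `G` on the C*-algebra `A` making it a
`G`-algebra: a semigroup homomorphism `G → End(A)` into the *-endomorphisms of `A` such
that `g g*(a)·b = a·g g*(b)` for all `a b : A` and `g : G`. -/
structure IsGAlgebra (α : G → A →⋆ₙₐ[ℂ] A) : Prop where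
  map_mul : ∀ g h : G, α (g * h) = (α g).comp (α h)
  central : ∀ (g : G) (a b : A), α (g * star g) a * b = a * α (g * star g) b

variable (α : G → A →⋆ₙₐ[ℂ] A)

/-- The generator of the free *-algebra corresponding to `a ∈ A`. -/
def genA (a : A) : FreeStar (A ⊕ G) := MonoidAlgebra.single (FreeMonoid.of (Sum.inl a, false)) 1

/-- The generator of the free *-algebra corresponding to `g ∈ G`. -/
def genG (g : G) : FreeStar (A ⊕ G) := MonoidAlgebra.single (FreeMonoid.of (Sum.inr g, false)) 1

/-- The defining relations of `𝔽(G,A)`: the *-algebra relations of `A` are respected, the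
multiplication and involution of `G` are respected, and `g(a)·g g* = g·a·g*`,
`[g g*, a] = 0` hold; the relation is moreover closed under `star`, so that the ideal
generated by it is a two-sided *-ideal. -/
inductive Rel : FreeStar (A ⊕ G) → FreeStar (A ⊕ G) → Prop
  | add_A (a b : A) : Rel (genA (G := G) (a + b)) (genA a + genA b)
  | smul_A (c : ℂ) (a : A) : Rel (genA (G := G) (c • a)) (c • genA a)
  | mul_A (a b : A) : Rel (genA (G := G) (a * b)) (genA a * genA b)
  | star_A (a : A) : Rel (genA (G := G) (star a)) (star (genA a))
  | mul_G (g h : G) : Rel (genG (A := A) (g * h)) (genG g * genG h)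
  | star_G (g : G) : Rel (genG (A := A) (star g)) (star (genG g))
  | act (g : G) (a : A) :
      Rel (genA (α g a) * genG g * genG (star g)) (genG g * genA a * genG (star g))
  | comm (g : G) (a : A) :
      Rel (genG g * genG (star g) * genA a) (genA a * genG g * genG (star g))
  | star_cl {x y} : Rel x y → Rel (star x) (star y)

/-- The universal *-algebra `𝔽(G,A)`: the quotient of the free complex *-algebra on the
set `A ⊔ G` by the two-sided *-ideal generated by the defining relations. -/
abbrev F := RingQuot (Rel α)

instance : StarRing (F α) := RingQuot.starRing _ (fun _ _ h => Rel.star_cl h)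

/-- The canonical copy of `a ∈ A` inside `𝔽(G,A)`. -/
def ιA (a : A) : F α := RingQuot.mkAlgHom ℂ (Rel α) (genA a)

/-- The canonical copy of `g ∈ G` inside `𝔽(G,A)`. -/
def ιG (g : G) : F α := RingQuot.mkAlgHom ℂ (Rel α) (genG g)

/-- The element `e₀(1-e₁)⋯(1-eₙ)` of `𝔽(G,A)` (product expanded multiplicatively),
given `e₀` and the list `[e₁, …, eₙ]`. -/
def elemP (e₀ : G) (l : List G) : F α :=
  l.foldl (fun p e => p - p * ιG α e) (ιG α e₀)

/-- The element `g·e₀(1-e₁)⋯(1-eₙ)` of `𝔽(G,A)`. -/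
def elemGE (g e₀ : G) (l : List G) : F α := ιG α g * elemP α e₀ l

/-- The set `E(G)` of projections `e₀(1-e₁)⋯(1-eₙ)` in `𝔽(G,A)`, with `e₀, …, eₙ`
idempotents of `G`. -/
def EG : Set (F α) :=
  {x | ∃ (e₀ : G) (l : List G), e₀ * e₀ = e₀ ∧ (∀ e ∈ l, e * e = e) ∧ x = elemP α e₀ l}

/-- The inverse semigroup `G_E = {g·p | g ∈ G, p ∈ E(G)}` inside `𝔽(G,A)`. -/
def GE : Set (F α) :=
  {x | ∃ (g e₀ : G) (l : List G),
    e₀ * e₀ = e₀ ∧ (∀ e ∈ l, e * e = e) ∧ x = elemGE α g e₀ l}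

/-- The extension of the `G`-action along a list: `(id - α e₁)∘⋯∘(id - α eₙ)`. -/
def actL : List G → A → A
  | [] => id
  | e :: l => fun a => actL l a - α e (actL l a)

/-- The extension of the `G`-action to `E(G)`:
`α_{e₀(1-e₁)⋯(1-eₙ)} = α_{e₀}∘(id - α_{e₁})∘⋯∘(id - α_{eₙ})`. -/
def actP (e₀ : G) (l : List G) : A → A := fun a => α e₀ (actL α l a)

/-- The extension of the `G`-action to `G_E`: `α_{g·p} = α_g ∘ α_p`. -/
def actGE (g e₀ : G) (l : List G) : A → A := fun a => α g (actP α e₀ l a)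

/-- The action of `k* = (g·e₀(1-e₁)⋯(1-eₙ))* = g*·(g e₀ g*)(1 - g e₁ g*)⋯(1 - g eₙ g*)`,
for `k = g·e₀(1-e₁)⋯(1-eₙ) ∈ G_E`. -/
def actStar (g e₀ : G) (l : List G) : A → A :=
  fun a => α (star g) (actP α (g * e₀ * star g) (l.map fun e => g * e * star g) a)

/-- The subalgebra `A_{k k*} = α_{k k*}(A) = (α_k ∘ α_{k*})(A)`,
for `k = g·e₀(1-e₁)⋯(1-eₙ) ∈ G_E`. -/
def carrier (g e₀ : G) (l : List G) : Set A :=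
  Set.range fun a => actGE α g e₀ l (actStar α g e₀ l a)

/-- `S` is a sub-inverse semigroup of `G`: a subset closed under multiplication and
involution. -/
structure IsSubInvSemigroup (S : Set G) : Prop where
  mul_mem : ∀ {a b : G}, a ∈ S → b ∈ S → a * b ∈ S
  star_mem : ∀ {a : G}, a ∈ S → star a ∈ S

variable (S : Set G)

/-- The set `E(H')` of projections `e₀(1-e₁)⋯(1-eₙ)` with `e₀, …, eₙ` idempotents of
`H' = S`. -/
def EH : Set (F α) :=
  {x | ∃ (e₀ : G) (l : List G), (e₀ ∈ S ∧ e₀ * e₀ = e₀) ∧ (∀ e ∈ l, e ∈ S ∧ e * e = e) ∧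
    x = elemP α e₀ l}

/-- `H⁽⁰⁾`: the set of nonzero minimal projections of `E(H')`
(where `q ≤ p` means `q p = q`). -/
def H0 : Set (F α) :=
  {p | p ∈ EH α S ∧ p ≠ 0 ∧ ∀ q ∈ EH α S, q ≠ 0 → q * p = q → q = p}

/-- The groupoid `H = {t·e | t ∈ H', e ∈ H⁽⁰⁾} \ {0}` associated to `H'`. -/
def Hgpd : Set (F α) :=
  {x | x ≠ 0 ∧ ∃ t ∈ S, ∃ e ∈ H0 α S, x = ιG α t * e}

/-- `G_H = {g·e | g ∈ G, e ∈ H⁽⁰⁾, g* g ≥ e} \ {0}`. -/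
def GH : Set (F α) :=
  {x | x ≠ 0 ∧ ∃ (g : G), ∃ e ∈ H0 α S, x = ιG α g * e ∧ e * ιG α (star g * g) = e}

/-- The relation `≡` on `G_H`: `g ≡ h` iff `g t = h` for some `t ∈ H`. -/
def equivH (x y : F α) : Prop := ∃ t ∈ Hgpd α S, x * t = y

end GAlgebra

/-- For an assertion `P`, the scalar `[P]` which is `1` if `P` is true and `0` if `P`
is false. -/
def ind (P : Prop) : ℂ := @ite _ P (Classical.propDecidable P) 1 0

end Green

namespace Green

open scoped ZeroAtInfty

section Quotient

variable {G : Type*} [InverseSemigroup G]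
variable {A : Type*} [NonUnitalNormedRing A] [StarRing A] [CStarRing A] [NormedSpace ℂ A]
  [IsScalarTower ℂ A A] [SMulCommClass ℂ A A] [StarModule ℂ A] [CompleteSpace A]
variable (α : G → A →⋆ₙₐ[ℂ] A) (S : Set G)

/-- The set-theoretical quotient `G_H/H` of `G_H` by the relation `≡`. -/
def QGH := Quot (fun x y : {z : F α // z ∈ GH α S} => equivH α S x.1 y.1)

/-- The class of an element of `G_H` in `G_H/H`. -/
def QGHmk (x : {z : F α // z ∈ GH α S}) : QGH α S := Quot.mk _ x

/-- `G_H/H` is a discrete (topological) space. -/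
instance : TopologicalSpace (QGH α S) := ⊥
instance : DiscreteTopology (QGH α S) := ⟨rfl⟩

variable {W : Type*} [NormedAddCommGroup W]

/-- The function `w·δ_q ∈ C₀(G_H/H, W)` supported at the single point `q`, with value
`w` there.  (On the discrete space `G_H/H` such functions vanish at infinity.) -/
def deltaFn (q : QGH α S) (w : W) : C₀(QGH α S, W) where
  toFun := fun x => @ite _ (x = q) (Classical.propDecidable _) w 0
  continuous_toFun := continuous_of_discreteTopology
  zero_at_infty' := by
    have hmem : {x : QGH α S | (@ite _ (x = q) (Classical.propDecidable _) w 0) = 0}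
        ∈ Filter.cocompact (QGH α S) :=
      Filter.mem_cocompact.mpr ⟨{q}, isCompact_singleton,
        fun x hx => if_neg (by simpa using hx)⟩
    refine Filter.Tendsto.congr' ?_ tendsto_const_nhds
    filter_upwards [hmem] with x hx
    exact hx.symm

end Quotient

end Green

/-!
Every `x ∈ G_H` is a partial isometry `ι(g) e` whose source projection `x* x = e` is a minimal
projection of `E(H')`. By minimality, a projection of `E(H')` either kills an element of `H` or
fixes it; hence right multiplication by `H` preserves `G_H`, and `≡` is compatible with left
multiplication by `G`, which is part (1). So left multiplication by `g` induces a partial bijection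
of `G_H/H` with inverse left multiplication by `g*`; these compose like `G`, and for `g g*` it is a
partial identity. Pushing functions forward along partial bijections of discrete spaces gives
`*`-endomorphisms of `c₀`, which turns these facts into (2) and (3); uniqueness holds because the
`δ`-functions span a dense subspace.
-/

namespace InverseSemigroup

variable {G : Type*} [InverseSemigroup G] {e f : G}

theorem star_involutive : Function.Involutive (star : G → G) := fun g =>
  (star_unique (star g) g (star_mul_self_mul_star g) (mul_star_mul_self g)).symm

theorem star_eq_self_of_isIdempotentElem (he : IsIdempotentElem e) : star e = e :=
  (star_unique e e (by rw [he, he]) (by rw [he, he])).symm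

theorem isIdempotentElem_star_mul (g : G) : IsIdempotentElem (star g * g) := by
  rw [IsIdempotentElem, ← mul_assoc, star_mul_self_mul_star]

theorem isIdempotentElem_mul_star (g : G) : IsIdempotentElem (g * star g) := by
  rw [IsIdempotentElem, ← mul_assoc, mul_star_mul_self]

-- `f (ef)* e` is again an inverse of `ef`, hence equals `(ef)*`, which is therefore idempotent.
theorem isIdempotentElem_mul (he : IsIdempotentElem e) (hf : IsIdempotentElem f) :
    IsIdempotentElem (e * f) := by
  set x := star (e * f)
  have hx : f * x * e = x := by
    refine star_unique (e * f) (f * x * e) ?_ ?_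
    · calc e * f * (f * x * e) * (e * f) = e * (f * f) * x * (e * e) * f := by
            simp only [mul_assoc]
        _ = e * f * x * (e * f) := by rw [he.eq, hf.eq]; simp only [mul_assoc]
        _ = e * f := mul_star_mul_self _
    · calc f * x * e * (e * f) * (f * x * e) = f * (x * (e * e * (f * f)) * x) * e := by
            simp only [mul_assoc]
        _ = f * x * e := by rw [he.eq, hf.eq, star_mul_self_mul_star, mul_assoc]
  have hxx : IsIdempotentElem x := by
    calc x * x = f * (x * (e * f) * x) * e := by
          conv_lhs => rw [← hx]
          simp only [mul_assoc]
      _ = x := by rw [star_mul_self_mul_star]; exact hx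
  have hef : e * f = x := by
    rw [← star_eq_self_of_isIdempotentElem hxx, star_involutive]
  rwa [hef]

-- `fe` is an inverse of the idempotent `ef`, whose only inverse is `ef` itself.
theorem commute_of_isIdempotentElem (he : IsIdempotentElem e) (hf : IsIdempotentElem f) :
    Commute e f := by
  have hfe : f * e = star (e * f) := by
    refine star_unique (e * f) (f * e) ?_ ?_
    · calc e * f * (f * e) * (e * f) = (e * f) * (e * f) := by
            simp only [mul_assoc, ← mul_assoc f f, ← mul_assoc e e, hf.eq, he.eq]
        _ = e * f := isIdempotentElem_mul he hf
    · calc f * e * (e * f) * (f * e) = (f * e) * (f * e) := by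
            simp only [mul_assoc, ← mul_assoc f f, ← mul_assoc e e, hf.eq, he.eq]
        _ = f * e := isIdempotentElem_mul hf he
  rw [Commute, SemiconjBy, hfe, star_eq_self_of_isIdempotentElem (isIdempotentElem_mul he hf)]

theorem star_mul_rev (g h : G) : star (g * h) = star h * star g := by
  have hc := commute_of_isIdempotentElem (isIdempotentElem_mul_star h)
    (isIdempotentElem_star_mul g)
  refine (star_unique (g * h) (star h * star g) ?_ ?_).symm
  · calc g * h * (star h * star g) * (g * h) = g * (h * star h * (star g * g)) * h := by
          simp only [mul_assoc]
      _ = (g * star g * g) * (h * star h * h) := by rw [hc.eq]; simp only [mul_assoc]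
      _ = g * h := by rw [mul_star_mul_self, mul_star_mul_self]
  · calc star h * star g * (g * h) * (star h * star g)
          = star h * (star g * g * (h * star h)) * star g := by simp only [mul_assoc]
      _ = (star h * h * star h) * (star g * g * star g) := by rw [← hc.eq]; simp only [mul_assoc]
      _ = star h * star g := by rw [star_mul_self_mul_star, star_mul_self_mul_star]

instance toStarMul : StarMul G where
  star_involutive := star_involutive
  star_mul := star_mul_rev

theorem isIdempotentElem_star_mul_mul (u : G) (he : IsIdempotentElem e) :
    IsIdempotentElem (star u * e * u) := by
  have hc := commute_of_isIdempotentElem he (isIdempotentElem_mul_star u)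
  calc star u * e * u * (star u * e * u) = star u * (e * (u * star u) * e) * u := by
        simp only [mul_assoc]
    _ = star u * e * (u * star u * u) := by
        rw [hc.eq, mul_assoc (u * star u), he.eq, ← hc.eq]; simp only [mul_assoc]
    _ = star u * e * u := by rw [mul_star_mul_self]

theorem star_mul_self_mul_eq (a b : G) : star a * a * b = b * (star (a * b) * (a * b)) := by
  have hc := commute_of_isIdempotentElem (isIdempotentElem_star_mul a) (isIdempotentElem_mul_star b)
  calc star a * a * b = star a * a * (b * star b * b) := by rw [mul_star_mul_self]
    _ = star a * a * (b * star b) * b := by simp only [mul_assoc]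
    _ = b * star b * (star a * a) * b := by rw [hc.eq]
    _ = b * (star (a * b) * (a * b)) := by rw [star_mul]; simp only [mul_assoc]

theorem star_mul_self_mul_star_mul_self (a b : G) :
    star (a * b) * (a * b) * (star b * b) = star (a * b) * (a * b) := by
  rw [star_mul]
  calc star b * star a * (a * b) * (star b * b) = star b * star a * a * (b * star b * b) := by
        simp only [mul_assoc]
    _ = star b * star a * (a * b) := by rw [mul_star_mul_self]; simp only [mul_assoc]

end InverseSemigroup

namespace ZeroAtInftyContinuousMap

open Filter Topology
open scoped ZeroAtInfty

section Discrete

variable {X Y Z : Type*} [TopologicalSpace X] [DiscreteTopology X]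
  [TopologicalSpace Y] [DiscreteTopology Y] [TopologicalSpace Z] [DiscreteTopology Z]
  {β : Type*} [TopologicalSpace β] [Zero β]

def ofTendstoCofinite (f : X → β) (hf : Tendsto f cofinite (𝓝 0)) : C₀(X, β) where
  toFun := f
  continuous_toFun := continuous_of_discreteTopology
  zero_at_infty' := by rwa [cocompact_eq_cofinite]

open scoped Classical in
def single (a : X) (w : β) : C₀(X, β) :=
  ofTendstoCofinite (fun x => if x = a then w else 0)
    (tendsto_const_nhds.congr' ((eventually_cofinite_ne a).mono fun _ hx => (if_neg hx).symm))

open scoped Classical in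
theorem single_apply (a x : X) (w : β) : single a w x = if x = a then w else 0 := rfl

theorem tendsto_cofinite (x : C₀(X, β)) : Tendsto x cofinite (𝓝 0) := by
  simpa [cocompact_eq_cofinite] using x.zero_at_infty'

def pushforwardFun (e : X ≃. Y) (x : C₀(X, ℂ)) : C₀(Y, ℂ) :=
  ofTendstoCofinite (fun y => (e.symm y).elim 0 x) fun U hU => by
    have hfin : {a | x a ∉ U}.Finite := tendsto_cofinite x hU
    refine ((hfin.image e).preimage (Option.some_injective _).injOn).subset fun y hy => ?_
    cases hy' : e.symm y with
    | none => exact absurd (by simpa [hy'] using mem_of_mem_nhds hU) hy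
    | some a => exact ⟨a, by simpa [hy'] using hy, e.eq_some_iff.mp hy'⟩

theorem pushforwardFun_apply (e : X ≃. Y) (x : C₀(X, ℂ)) (y : Y) :
    pushforwardFun e x y = (e.symm y).elim 0 x := rfl

def pushforward (e : X ≃. Y) : C₀(X, ℂ) →⋆ₙₐ[ℂ] C₀(Y, ℂ) where
  toFun := pushforwardFun e
  map_smul' c x := by ext y; cases h : e.symm y <;> simp [pushforwardFun_apply, h]
  map_zero' := by ext y; cases h : e.symm y <;> simp [pushforwardFun_apply, h]
  map_add' x x' := by ext y; cases h : e.symm y <;> simp [pushforwardFun_apply, h]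
  map_mul' x x' := by ext y; cases h : e.symm y <;> simp [pushforwardFun_apply, h]
  map_star' x := by ext y; cases h : e.symm y <;> simp [pushforwardFun_apply, h]

theorem pushforward_apply (e : X ≃. Y) (x : C₀(X, ℂ)) (y : Y) :
    pushforward e x y = (e.symm y).elim 0 x := rfl

theorem norm_pushforward_le (e : X ≃. Y) (x : C₀(X, ℂ)) : ‖pushforward e x‖ ≤ ‖x‖ := by
  rw [← norm_toBCF_eq_norm, BoundedContinuousFunction.norm_le (norm_nonneg _)]
  intro y
  cases h : e.symm y with
  | none => simp [toBCF, pushforward_apply, h]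
  | some a =>
    calc ‖(pushforward e x).toBCF y‖ = ‖x.toBCF a‖ := by
          show ‖(e.symm y).elim 0 x‖ = ‖x a‖
          rw [h, Option.elim_some]
      _ ≤ ‖x.toBCF‖ := x.toBCF.norm_coe_le_norm a
      _ = ‖x‖ := norm_toBCF_eq_norm

theorem continuous_pushforward (e : X ≃. Y) : Continuous (pushforward e) :=
  AddMonoidHomClass.continuous_of_bound _ 1 fun x => by simpa using norm_pushforward_le e x

theorem pushforward_single (e : X ≃. Y) (a : X) (w : ℂ) :
    pushforward e (single a w) = (e a).elim 0 (single · w) := by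
  classical
  ext y
  have hL : pushforward e (single a w) y = if e.symm y = some a then w else 0 := by
    cases h : e.symm y <;> simp [pushforward_apply, single_apply, h]
  have hR : ((e a).elim 0 (single · w) : C₀(Y, ℂ)) y = if e.symm y = some a then w else 0 := by
    simp only [e.eq_some_iff]; cases e a <;> simp [single_apply, eq_comm]
  rw [hL, hR]

theorem pushforward_trans (e : X ≃. Y) (f : Y ≃. Z) :
    pushforward (e.trans f) = (pushforward f).comp (pushforward e) := by
  ext x z
  simp only [NonUnitalStarAlgHom.comp_apply, pushforward_apply, PEquiv.symm_trans_rev]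
  cases h : f.symm z <;> simp [PEquiv.trans, h, pushforward_apply]

theorem pushforward_mul_comm_of_le_refl {e : X ≃. X} (he : e ≤ PEquiv.refl X)
    (x y : C₀(X, ℂ)) : pushforward e x * y = x * pushforward e y := by
  ext a
  simp only [coe_mul, Pi.mul_apply, pushforward_apply]
  cases h : e.symm a with
  | none => simp
  | some b =>
    obtain rfl : b = a := by simpa using PEquiv.le_def.mp he b a (e.eq_some_iff.mp h)
    simp

theorem dense_span_single :
    Dense (Submodule.span ℂ (Set.range fun a : X => single a (1 : ℂ)) : Set C₀(X, ℂ)) := by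
  classical
  refine Metric.dense_iff.mpr fun x r hr => ?_
  set K := (x ⁻¹' Metric.ball 0 (r / 2))ᶜ
  have hK : K.Finite := tendsto_cofinite x (Metric.ball_mem_nhds 0 (half_pos hr))
  have hy : ∀ b, (∑ a ∈ hK.toFinset, x a • single a (1 : ℂ)) b = if b ∈ K then x b else 0 :=
    fun b => by
      have := map_sum (AddMonoidHom.mk' (fun f : C₀(X, ℂ) => f b) fun _ _ => rfl)
        (fun a => x a • single a (1 : ℂ)) hK.toFinset
      simp only [AddMonoidHom.mk'_apply] at this
      simp [this, single_apply, hK.mem_toFinset]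
  refine ⟨∑ a ∈ hK.toFinset, x a • single a (1 : ℂ), ?_,
    Submodule.sum_mem _ fun a _ => Submodule.smul_mem _ _ (Submodule.subset_span ⟨a, rfl⟩)⟩
  rw [Metric.mem_ball, dist_comm, ← dist_toBCF_eq_dist]
  refine lt_of_le_of_lt ((BoundedContinuousFunction.dist_le (half_pos hr).le).mpr fun b => ?_)
    (half_lt_self hr)
  show dist (x b) ((∑ a ∈ hK.toFinset, x a • single a (1 : ℂ) : C₀(X, ℂ)) b) ≤ r / 2
  rw [hy]
  split_ifs with hb
  · simp [(half_pos hr).le]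
  · simpa [K] using (mem_ball_zero_iff.mp (not_not.mp hb)).le

theorem ext_of_single {E 𝓕 : Type*} [TopologicalSpace E] [T2Space E] [AddCommMonoid E]
    [Module ℂ E] [FunLike 𝓕 C₀(X, ℂ) E] [LinearMapClass 𝓕 ℂ C₀(X, ℂ) E] {φ ψ : 𝓕}
    (hφ : Continuous φ) (hψ : Continuous ψ) (h : ∀ a, φ (single a 1) = ψ (single a 1)) :
    φ = ψ := by
  refine DFunLike.coe_injective (hφ.ext_on dense_span_single hψ fun x hx => ?_)
  induction hx using Submodule.span_induction with
  | mem x hx => obtain ⟨a, rfl⟩ := hx; exact h a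
  | zero => simp
  | add x x' _ _ hx hx' => simp [hx, hx']
  | smul c x _ hx => simp [hx]

end Discrete

end ZeroAtInftyContinuousMap

namespace Green

open InverseSemigroup ZeroAtInftyContinuousMap
open scoped ZeroAtInfty

section Projections

variable {G : Type*} [InverseSemigroup G] {A : Type*} [NonUnitalNormedRing A] [StarRing A]
  [NormedSpace ℂ A] (α : G → A →⋆ₙₐ[ℂ] A) (S : Set G) {e f : G}

local notation "ι" => ιG α

theorem ιG_mul (g h : G) : ι (g * h) = ι g * ι h := by
  rw [ιG, RingQuot.mkAlgHom_rel ℂ (Rel.mul_G g h), map_mul]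
  rfl

theorem star_ιG (g : G) : star (ι g) = ι (star g) := by
  have hmk : ∀ x, RingQuot.mkAlgHom ℂ (Rel α) x = ⟨Quot.mk _ x⟩ := fun x => by
    rw [show RingQuot.mkAlgHom ℂ (Rel α) x = RingQuot.mkRingHom (Rel α) x by
      rw [← RingQuot.mkAlgHom_coe ℂ (Rel α)]; rfl, RingQuot.mkRingHom_def]
    rfl
  have hstar : star (ι g) = RingQuot.mkAlgHom ℂ (Rel α) (star (genG g)) := by
    rw [ιG, hmk, hmk]
    rfl
  rw [hstar, ← RingQuot.mkAlgHom_rel ℂ (Rel.star_G g), ιG]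

theorem isIdempotentElem_ιG (he : IsIdempotentElem e) : IsIdempotentElem (ι e) := by
  rw [IsIdempotentElem, ← ιG_mul, he.eq]

theorem commute_ιG (he : IsIdempotentElem e) (hf : IsIdempotentElem f) : Commute (ι e) (ι f) := by
  rw [Commute, SemiconjBy, ← ιG_mul, ← ιG_mul, (commute_of_isIdempotentElem he hf).eq]

-- Commutative, since idempotents of `G` commute, and it contains `E(G)`.
def idempotentSubalgebra : Subalgebra ℂ (F α) :=
  Algebra.adjoin ℂ (ιG α '' {e | IsIdempotentElem e})

theorem commute_ιG_of_mem_idempotentSubalgebra {p : F α} (hf : IsIdempotentElem f)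
    (hp : p ∈ idempotentSubalgebra α) : Commute (ι f) p :=
  Algebra.commute_of_mem_adjoin_of_forall_mem_commute hp <| by
    rintro _ ⟨e, he, rfl⟩
    exact commute_ιG α hf he

theorem commute_of_mem_idempotentSubalgebra {p q : F α} (hp : p ∈ idempotentSubalgebra α)
    (hq : q ∈ idempotentSubalgebra α) : Commute p q :=
  Algebra.commute_of_mem_adjoin_of_forall_mem_commute hq <| by
    rintro _ ⟨e, he, rfl⟩
    exact (commute_ιG_of_mem_idempotentSubalgebra α he hp).symm

theorem mul_ιG_eq_of_mem_idempotentSubalgebra {p : F α} (hp : p ∈ idempotentSubalgebra α)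
    (u : G) : p * ι u = ι u * (ι (star u) * p * ι u) := by
  calc p * ι u = p * ι (u * star u) * ι u := by rw [mul_assoc, ← ιG_mul, mul_star_mul_self]
    _ = ι u * (ι (star u) * p * ι u) := by
      rw [← (commute_ιG_of_mem_idempotentSubalgebra α (isIdempotentElem_mul_star u) hp).eq,
        ιG_mul]
      simp only [mul_assoc]

def complProd (l : List G) : F α := (l.map fun e => 1 - ι e).prod

theorem complProd_cons (e : G) (l : List G) :
    complProd α (e :: l) = (1 - ι e) * complProd α l := by
  simp [complProd]

theorem elemP_eq (e₀ : G) (l : List G) : elemP α e₀ l = ι e₀ * complProd α l := by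
  suffices ∀ p, l.foldl (fun p e => p - p * ι e) p = p * complProd α l from this _
  induction l with
  | nil => simp [complProd]
  | cons e l ih =>
    intro p
    rw [List.foldl_cons, ih, complProd_cons, ← mul_assoc, mul_sub, mul_one]

theorem complProd_append (l m : List G) :
    complProd α (l ++ m) = complProd α l * complProd α m := by
  simp [complProd]

theorem ιG_mem_idempotentSubalgebra (he : IsIdempotentElem e) :
    ι e ∈ idempotentSubalgebra α :=
  Algebra.subset_adjoin ⟨e, he, rfl⟩

theorem complProd_mem (l : List G) (hl : ∀ e ∈ l, IsIdempotentElem e) :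
    complProd α l ∈ idempotentSubalgebra α := by
  refine Subalgebra.list_prod_mem _ fun x hx => ?_
  obtain ⟨e, he, rfl⟩ := List.mem_map.mp hx
  exact sub_mem (one_mem _) (ιG_mem_idempotentSubalgebra α (hl e he))

theorem isIdempotentElem_complProd {l : List G} (hl : ∀ e ∈ l, IsIdempotentElem e) :
    IsIdempotentElem (complProd α l) := by
  induction l with
  | nil => exact IsIdempotentElem.one
  | cons e l ih =>
    have hl' : ∀ e ∈ l, IsIdempotentElem e := fun e he => hl e (List.mem_cons_of_mem _ he)
    have he : IsIdempotentElem e := hl e List.mem_cons_self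
    rw [complProd_cons]
    exact .mul_of_commute (commute_of_mem_idempotentSubalgebra α
        (sub_mem (one_mem _) (ιG_mem_idempotentSubalgebra α he)) (complProd_mem α l hl'))
      (isIdempotentElem_ιG α he).one_sub (ih hl')

theorem isSelfAdjoint_complProd {l : List G} (hl : ∀ e ∈ l, IsIdempotentElem e) :
    IsSelfAdjoint (complProd α l) := by
  induction l with
  | nil => exact .one _
  | cons e l ih =>
    have hl' : ∀ e ∈ l, IsIdempotentElem e := fun e he => hl e (List.mem_cons_of_mem _ he)
    have he : IsIdempotentElem e := hl e List.mem_cons_self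
    have hιe : IsSelfAdjoint (ι e) := by
      rw [IsSelfAdjoint, star_ιG, star_eq_self_of_isIdempotentElem he]
    rw [complProd_cons]
    exact ((IsSelfAdjoint.one _).sub hιe |>.commute_iff (ih hl')).mp
      (commute_of_mem_idempotentSubalgebra α
        (sub_mem (one_mem _) (ιG_mem_idempotentSubalgebra α he)) (complProd_mem α l hl'))

theorem complProd_mul_ιG {l : List G} (hl : ∀ e ∈ l, IsIdempotentElem e) (u : G) :
    complProd α l * ι u = ι u * complProd α (l.map fun e => star u * e * u) := by
  induction l with
  | nil => simp [complProd]
  | cons e l ih =>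
    have he : IsIdempotentElem e := hl e List.mem_cons_self
    have hstep : (1 - ι e) * ι u = ι u * (1 - ι (star u * e * u)) := by
      rw [sub_mul, one_mul, mul_ιG_eq_of_mem_idempotentSubalgebra α
        (ιG_mem_idempotentSubalgebra α he), mul_sub, mul_one, ← ιG_mul, ← ιG_mul]
    rw [complProd_cons, mul_assoc, ih fun e he => hl e (List.mem_cons_of_mem _ he),
      ← mul_assoc, hstep, List.map_cons, complProd_cons, mul_assoc]

theorem ιG_mem_EH (hfS : f ∈ S) (hf : IsIdempotentElem f) : ι f ∈ EH α S :=
  ⟨f, [], ⟨hfS, hf⟩, by simp, rfl⟩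

variable {α S}

theorem mem_idempotentSubalgebra_of_mem_EH {p : F α} (hp : p ∈ EH α S) :
    p ∈ idempotentSubalgebra α := by
  obtain ⟨e₀, l, ⟨-, he₀⟩, hl, rfl⟩ := hp
  rw [elemP_eq]
  exact mul_mem (ιG_mem_idempotentSubalgebra α he₀) (complProd_mem α l fun e he => (hl e he).2)

theorem isIdempotentElem_of_mem_EH {p : F α} (hp : p ∈ EH α S) : IsIdempotentElem p := by
  obtain ⟨e₀, l, ⟨-, he₀⟩, hl, rfl⟩ := hp
  have hl' : ∀ e ∈ l, IsIdempotentElem e := fun e he => (hl e he).2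
  rw [elemP_eq]
  exact .mul_of_commute (commute_ιG_of_mem_idempotentSubalgebra α he₀ (complProd_mem α l hl'))
    (isIdempotentElem_ιG α he₀) (isIdempotentElem_complProd α hl')

theorem isSelfAdjoint_of_mem_EH {p : F α} (hp : p ∈ EH α S) : IsSelfAdjoint p := by
  obtain ⟨e₀, l, ⟨-, he₀⟩, hl, rfl⟩ := hp
  have hl' : ∀ e ∈ l, IsIdempotentElem e := fun e he => (hl e he).2
  have hιe₀ : IsSelfAdjoint (ι e₀) := by
    rw [IsSelfAdjoint, star_ιG, star_eq_self_of_isIdempotentElem he₀]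
  rw [elemP_eq]
  exact (hιe₀.commute_iff (isSelfAdjoint_complProd α hl')).mp
    (commute_ιG_of_mem_idempotentSubalgebra α he₀ (complProd_mem α l hl'))

theorem mul_mem_EH (hS : IsSubInvSemigroup S) {p q : F α} (hp : p ∈ EH α S) (hq : q ∈ EH α S) :
    p * q ∈ EH α S := by
  obtain ⟨e₀, l, ⟨he₀S, he₀⟩, hl, rfl⟩ := hp
  obtain ⟨f₀, m, ⟨hf₀S, hf₀⟩, hm, rfl⟩ := hq
  refine ⟨e₀ * f₀, l ++ m, ⟨hS.mul_mem he₀S hf₀S, isIdempotentElem_mul he₀ hf₀⟩,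
    fun e he => (List.mem_append.mp he).elim (hl e) (hm e), ?_⟩
  have hc := commute_ιG_of_mem_idempotentSubalgebra α hf₀
    (complProd_mem α l fun e he => (hl e he).2)
  rw [elemP_eq, elemP_eq, elemP_eq, complProd_append, ιG_mul, mul_assoc,
    ← mul_assoc (complProd α l), ← hc.eq]
  simp only [mul_assoc]

theorem conj_mem_EH (hS : IsSubInvSemigroup S) {p : F α} (hp : p ∈ EH α S) {s : G} (hs : s ∈ S) :
    ι (star s) * p * ι s ∈ EH α S := by
  obtain ⟨e₀, l, ⟨he₀S, he₀⟩, hl, rfl⟩ := hp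
  have hconj : ∀ {e}, e ∈ S → star s * e * s ∈ S := fun he =>
    hS.mul_mem (hS.mul_mem (hS.star_mem hs) he) hs
  refine ⟨star s * e₀ * s, l.map fun e => star s * e * s,
    ⟨hconj he₀S, isIdempotentElem_star_mul_mul s he₀⟩, ?_, ?_⟩
  · simp only [List.mem_map]
    rintro _ ⟨e, he, rfl⟩
    exact ⟨hconj (hl e he).1, isIdempotentElem_star_mul_mul s (hl e he).2⟩
  · rw [elemP_eq, elemP_eq, mul_assoc, mul_assoc, complProd_mul_ιG α fun e he => (hl e he).2]
    simp only [ιG_mul, mul_assoc]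

theorem commute_ιG_of_mem_EH {p : F α} (hf : IsIdempotentElem f) (hp : p ∈ EH α S) :
    Commute (ι f) p :=
  commute_ιG_of_mem_idempotentSubalgebra α hf (mem_idempotentSubalgebra_of_mem_EH hp)

end Projections

section GH

variable {G : Type*} [InverseSemigroup G] {A : Type*} [NonUnitalNormedRing A] [StarRing A]
  [NormedSpace ℂ A] {α : G → A →⋆ₙₐ[ℂ] A} {S : Set G}

local notation "ι" => ιG α

theorem mul_eq_self_of_mem_H0 (hS : IsSubInvSemigroup S) {e q : F α} (he : e ∈ H0 α S)
    (hq : q ∈ EH α S) (hne : q * e ≠ 0) : q * e = e :=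
  he.2.2 _ (mul_mem_EH hS hq he.1) hne (by rw [mul_assoc, (isIdempotentElem_of_mem_EH he.1).eq])

-- Moving `p` past `ι s` conjugates it into another projection of `E(H')`, which either
-- kills or fixes the minimal projection `f`.
theorem mul_ιG_mul_eq_of_mem_H0 (hS : IsSubInvSemigroup S) {p f : F α} {s : G}
    (hp : p ∈ EH α S) (hs : s ∈ S) (hf : f ∈ H0 α S) (hne : p * (ι s * f) ≠ 0) :
    p * (ι s * f) = ι s * f := by
  have hswap : p * (ι s * f) = ι s * ((ι (star s) * p * ι s) * f) := by
    rw [← mul_assoc, mul_ιG_eq_of_mem_idempotentSubalgebra α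
      (mem_idempotentSubalgebra_of_mem_EH hp), mul_assoc]
  rw [hswap] at hne ⊢
  rw [mul_eq_self_of_mem_H0 hS hf (conj_mem_EH hS hp hs) (right_ne_zero_of_mul hne)]

theorem star_mul_self_ιG_mul {p : F α} (hp : p ∈ EH α S) (v : G) :
    star (ι v * p) * (ι v * p) = p * ι (star v * v) := by
  rw [star_mul, (isSelfAdjoint_of_mem_EH hp).star_eq, star_ιG]
  calc p * ι (star v) * (ι v * p) = p * (ι (star v * v) * p) := by
        rw [ιG_mul]; simp only [mul_assoc]
    _ = p * ι (star v * v) := by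
        rw [(commute_ιG_of_mem_EH (isIdempotentElem_star_mul v) hp).eq, ← mul_assoc,
          (isIdempotentElem_of_mem_EH hp).eq]

-- `x* x` is the projection `e'` of any witness of `x ∈ G_H`, and it is also `e (u* u) ≤ e`;
-- minimality of `e` gives `e' = e`.
theorem star_mul_self_eq_of_mem_GH {x e : F α} {u : G} (hx : x ∈ GH α S) (he : e ∈ H0 α S)
    (hxe : x = ι u * e) : star x * x = e := by
  obtain ⟨-, g, e', he', rfl, hle⟩ := hx
  have h1 : star (ι g * e') * (ι g * e') = e' := by rw [star_mul_self_ιG_mul he'.1, hle]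
  have h2 : e' = e * ι (star u * u) := by rw [← h1, hxe, star_mul_self_ιG_mul he.1]
  rw [h1]
  refine he.2.2 e' he'.1 he'.2.1 ?_
  rw [h2, mul_assoc, (commute_ιG_of_mem_EH (isIdempotentElem_star_mul u) he.1).eq, ← mul_assoc,
    (isIdempotentElem_of_mem_EH he.1).eq]

theorem mul_ιG_star_mul_self_eq_of_mem_GH {x e : F α} {u : G} (hx : x ∈ GH α S)
    (he : e ∈ H0 α S) (hxe : x = ι u * e) : e * ι (star u * u) = e := by
  rw [← star_mul_self_ιG_mul he.1, ← hxe, star_mul_self_eq_of_mem_GH hx he hxe]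

theorem mul_star_mul_self_of_mem_GH {x : F α} (hx : x ∈ GH α S) : x * star x * x = x := by
  obtain ⟨-, g, e, he, rfl, hle⟩ := hx
  calc ι g * e * star (ι g * e) * (ι g * e) = ι g * (e * (star (ι g * e) * (ι g * e))) := by
        simp only [mul_assoc]
    _ = ι g * e := by rw [star_mul_self_ιG_mul he.1, hle, (isIdempotentElem_of_mem_EH he.1).eq]

theorem Hgpd_subset_GH (hS : IsSubInvSemigroup S) : Hgpd α S ⊆ GH α S := by
  rintro _ ⟨ht, s, hs, f, hf, rfl⟩
  refine ⟨ht, s, f, hf, rfl, ?_⟩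
  have hne : ι (star s * s) * f ≠ 0 := fun h0 => ht <| by
    rw [← mul_star_mul_self s, mul_assoc, ιG_mul, mul_assoc, h0, mul_zero]
  rw [← (commute_ιG_of_mem_EH (isIdempotentElem_star_mul s) hf.1).eq]
  exact mul_eq_self_of_mem_H0 hS hf
    (ιG_mem_EH α S (hS.mul_mem (hS.star_mem hs) hs) (isIdempotentElem_star_mul s)) hne

theorem mul_mem_GH_of_mem_Hgpd (hS : IsSubInvSemigroup S) {x t : F α} (hx : x ∈ GH α S)
    (ht : t ∈ Hgpd α S) (hne : x * t ≠ 0) : x * t ∈ GH α S := by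
  obtain ⟨g, e, he, hxe, -⟩ := hx.2
  obtain ⟨s, hs, f, hf, hts⟩ := ht.2
  have het : e * (ι s * f) = ι s * f := mul_ιG_mul_eq_of_mem_H0 hS he.1 hs hf fun h0 =>
    hne (by rw [hxe, hts, mul_assoc, h0, mul_zero])
  have hxt : x * t = ι (g * s) * f := by rw [hxe, hts, mul_assoc, het, ιG_mul, mul_assoc]
  refine ⟨hne, g * s, f, hf, hxt, ?_⟩
  calc f * ι (star (g * s) * (g * s)) = star t * ((star x * x) * t) := by
        rw [← star_mul_self_ιG_mul hf.1, ← hxt, star_mul]; simp only [mul_assoc]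
    _ = f := by
        rw [star_mul_self_eq_of_mem_GH hx he hxe, hts, het, ← hts,
          star_mul_self_eq_of_mem_GH (Hgpd_subset_GH hS ht) hf hts]

theorem ιG_star_mul_ιG_mul_of_mem_GH {x : F α} {g : G} (hx : x ∈ GH α S)
    (hgx : ι g * x ∈ GH α S) : ι (star g) * (ι g * x) = x := by
  obtain ⟨-, g₁, e₁, he₁, rfl, -⟩ := hx
  have hle := mul_ιG_star_mul_self_eq_of_mem_GH hgx he₁ (u := g * g₁) (by rw [ιG_mul, mul_assoc])
  calc ι (star g) * (ι g * (ι g₁ * e₁)) = ι (star g * g * g₁) * e₁ := by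
        simp only [ιG_mul, mul_assoc]
    _ = ι g₁ * (e₁ * ι (star (g * g₁) * (g * g₁))) := by
        rw [star_mul_self_mul_eq, ιG_mul, mul_assoc,
          (commute_ιG_of_mem_EH (isIdempotentElem_star_mul _) he₁.1).eq]
    _ = ι g₁ * e₁ := by rw [hle]

theorem ιG_mul_mem_GH_of_ιG_mul_mul_mem_GH {x : F α} {g g' : G} (hx : x ∈ GH α S)
    (h : ι (g * g') * x ∈ GH α S) : ι g' * x ∈ GH α S := by
  obtain ⟨-, g₁, e₁, he₁, rfl, -⟩ := hx
  have hle := mul_ιG_star_mul_self_eq_of_mem_GH h he₁ (u := g * (g' * g₁))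
    (by simp only [ιG_mul, mul_assoc])
  refine ⟨fun h0 => h.1 (by rw [ιG_mul, mul_assoc, h0, mul_zero]), g' * g₁, e₁, he₁,
    by rw [ιG_mul, mul_assoc], ?_⟩
  conv_lhs => rw [← hle]
  rw [mul_assoc, ← ιG_mul, star_mul_self_mul_star_mul_self, hle]

theorem ιG_mul_star_self_mul_of_mem_GH {x : F α} {g : G} (hx : x ∈ GH α S)
    (h : ι (g * star g) * x ∈ GH α S) : ι (g * star g) * x = x := by
  have hstar : star (g * star g) = g * star g := by rw [star_mul, star_star]
  calc ι (g * star g) * x = ι (star (g * star g)) * (ι (g * star g) * x) := by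
        rw [hstar, ← mul_assoc, ← ιG_mul, (isIdempotentElem_mul_star g).eq]
    _ = x := ιG_star_mul_ιG_mul_of_mem_GH hx h

-- With `h' = h t`, the witness is `ι s* e₁`: `t ι s* = t t*` is a projection of `E(H')` that
-- fixes `e₁`, since it cannot kill it without killing `h' = h (t t*) t`.
theorem equivH_symm (hS : IsSubInvSemigroup S) {h h' : F α} (hh : h ∈ GH α S)
    (hh' : h' ∈ GH α S) (he : equivH α S h h') : equivH α S h' h := by
  obtain ⟨t, ht, rfl⟩ := he
  obtain ⟨hh0, g₁, e₁, he₁, rfl, -⟩ := hh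
  obtain ⟨s, hs, f, hf, hts⟩ := ht.2
  set ψ := t * star t with hψdef
  have hψ_eq : ψ = ι s * f * ι (star s) := by
    rw [hψdef, hts, star_mul, (isSelfAdjoint_of_mem_EH hf.1).star_eq, star_ιG, ← mul_assoc,
      mul_assoc (ι s) f f, (isIdempotentElem_of_mem_EH hf.1).eq]
  have hψ : ψ ∈ EH α S := by
    rw [hψ_eq]
    simpa only [star_star] using conj_mem_EH hS hf.1 (hS.star_mem hs)
  have hcomm : Commute ψ e₁ := commute_of_mem_idempotentSubalgebra α
    (mem_idempotentSubalgebra_of_mem_EH hψ) (mem_idempotentSubalgebra_of_mem_EH he₁.1)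
  have hψe₁ : ψ * e₁ = e₁ := by
    refine mul_eq_self_of_mem_H0 hS he₁ hψ fun h0 => hh'.1 ?_
    calc ι g₁ * e₁ * t = ι g₁ * (ψ * e₁) * t := by
          conv_lhs => rw [← mul_star_mul_self_of_mem_GH (Hgpd_subset_GH hS ht)]
          rw [hcomm.eq, hψdef]
          simp only [mul_assoc]
      _ = 0 := by rw [h0, mul_zero, zero_mul]
  have hmain : ι g₁ * e₁ * t * (ι (star s) * e₁) = ι g₁ * e₁ := by
    calc ι g₁ * e₁ * t * (ι (star s) * e₁) = ι g₁ * (e₁ * (t * ι (star s))) * e₁ := by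
          simp only [mul_assoc]
      _ = ι g₁ * e₁ := by
          rw [show t * ι (star s) = ψ by rw [hψ_eq, hts], ← hcomm.eq, hψe₁, mul_assoc,
            (isIdempotentElem_of_mem_EH he₁.1).eq]
  refine ⟨ι (star s) * e₁, ⟨fun h0 => hh0 ?_, star s, hS.star_mem hs, e₁, he₁, rfl⟩, hmain⟩
  rw [← hmain, h0, mul_zero]

theorem ιG_mul_mem_GH_of_equivH (hS : IsSubInvSemigroup S) {h h' : F α} {g : G}
    (hh : h ∈ GH α S) (hh' : h' ∈ GH α S) (he : equivH α S h h') (hgh : ι g * h ∈ GH α S) :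
    ι g * h' ∈ GH α S := by
  obtain ⟨t, ht, rfl⟩ := he
  rw [← mul_assoc]
  refine mul_mem_GH_of_mem_Hgpd hS hgh ht fun h0 => hh'.1 ?_
  rw [← ιG_star_mul_ιG_mul_of_mem_GH hh hgh, mul_assoc, h0, mul_zero]

theorem ιG_mul_mem_GH_iff_of_equivH (hS : IsSubInvSemigroup S) {h h' : F α} (g : G)
    (hh : h ∈ GH α S) (hh' : h' ∈ GH α S) (he : equivH α S h h') :
    ι g * h ∈ GH α S ↔ ι g * h' ∈ GH α S :=
  ⟨ιG_mul_mem_GH_of_equivH hS hh hh' he,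
    ιG_mul_mem_GH_of_equivH hS hh' hh (equivH_symm hS hh hh' he)⟩

theorem equivH.ιG_mul {h h' : F α} (he : equivH α S h h') (g : G) :
    equivH α S (ι g * h) (ι g * h') := by
  obtain ⟨t, ht, rfl⟩ := he
  exact ⟨t, ht, mul_assoc _ _ _⟩

end GH

section Translation

variable {G : Type*} [InverseSemigroup G] {A : Type*} [NonUnitalNormedRing A] [StarRing A]
  [NormedSpace ℂ A] (α : G → A →⋆ₙₐ[ℂ] A) {S : Set G}

local notation "ι" => ιG α

theorem QGHmk_surjective : Function.Surjective (QGHmk α S) :=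
  Quot.mk_surjective

open scoped Classical in
def translFun (hS : IsSubInvSemigroup S) (g : G) : QGH α S → Option (QGH α S) :=
  Quot.lift (fun h => if hg : ι g * h.1 ∈ GH α S then some (QGHmk α S ⟨_, hg⟩) else none)
    fun h h' he => by
      by_cases hg : ι g * h.1 ∈ GH α S
      · rw [dif_pos hg, dif_pos ((ιG_mul_mem_GH_iff_of_equivH hS g h.2 h'.2 he).mp hg)]
        exact congrArg some (Quot.sound (he.ιG_mul g))
      · rw [dif_neg hg, dif_neg (mt (ιG_mul_mem_GH_iff_of_equivH hS g h.2 h'.2 he).mpr hg)]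

open scoped Classical in
theorem translFun_mk (hS : IsSubInvSemigroup S) (g : G) (h : {z : F α // z ∈ GH α S}) :
    translFun α hS g (QGHmk α S h) =
      if hg : ι g * h.1 ∈ GH α S then some (QGHmk α S ⟨_, hg⟩) else none :=
  rfl

theorem translFun_star_of_eq_some (hS : IsSubInvSemigroup S) {g : G} {p q : QGH α S}
    (hpq : translFun α hS g p = some q) : translFun α hS (star g) q = some p := by
  obtain ⟨h, rfl⟩ := QGHmk_surjective α p
  rw [translFun_mk] at hpq
  split_ifs at hpq with hg
  obtain rfl := Option.some_injective _ hpq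
  have hcancel := ιG_star_mul_ιG_mul_of_mem_GH h.2 hg
  have hmem : ι (star g) * (ι g * h.1) ∈ GH α S := by rw [hcancel]; exact h.2
  rw [translFun_mk, dif_pos hmem]
  exact congrArg (some ∘ QGHmk α S) (Subtype.ext hcancel)

def transl (hS : IsSubInvSemigroup S) (g : G) : QGH α S ≃. QGH α S where
  toFun := translFun α hS g
  invFun := translFun α hS (star g)
  inv _ _ := ⟨fun h => by simpa using translFun_star_of_eq_some α hS h,
    translFun_star_of_eq_some α hS⟩

theorem transl_mul (hS : IsSubInvSemigroup S) (g g' : G) :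
    transl α hS (g * g') = (transl α hS g').trans (transl α hS g) := by
  ext1 p
  obtain ⟨h, rfl⟩ := QGHmk_surjective α p
  show translFun α hS (g * g') (QGHmk α S h) =
    (translFun α hS g' (QGHmk α S h)).bind (translFun α hS g)
  have hmul : ι (g * g') * h.1 = ι g * (ι g' * h.1) := by rw [ιG_mul, mul_assoc]
  rw [translFun_mk, translFun_mk]
  by_cases hg' : ι g' * h.1 ∈ GH α S
  · rw [dif_pos hg', Option.bind_some, translFun_mk]
    by_cases hg : ι g * (ι g' * h.1) ∈ GH α S
    · rw [dif_pos (hmul ▸ hg), dif_pos hg]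
      exact congrArg (some ∘ QGHmk α S) (Subtype.ext hmul)
    · rw [dif_neg (hmul ▸ hg), dif_neg hg]
  · rw [dif_neg hg', dif_neg fun hgg' => hg' (ιG_mul_mem_GH_of_ιG_mul_mul_mem_GH h.2 hgg'),
      Option.bind_none]

theorem transl_mul_star_self_le (hS : IsSubInvSemigroup S) (g : G) :
    transl α hS (g * star g) ≤ PEquiv.refl (QGH α S) := by
  refine PEquiv.le_def.mpr fun p q hpq => ?_
  obtain ⟨h, rfl⟩ := QGHmk_surjective α p
  change translFun α hS (g * star g) (QGHmk α S h) = some q at hpq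
  rw [translFun_mk] at hpq
  split_ifs at hpq with hg
  obtain rfl := Option.some_injective _ hpq
  exact congrArg (some ∘ QGHmk α S) (Subtype.ext (ιG_mul_star_self_mul_of_mem_GH h.2 hg).symm)

end Translation

section Quotient

variable {G : Type*} [InverseSemigroup G] {A : Type*} [NonUnitalNormedRing A] [StarRing A]
  [NormedSpace ℂ A] (α : G → A →⋆ₙₐ[ℂ] A) {S : Set G}

theorem deltaFn_eq_single {W : Type*} [NormedAddCommGroup W] (q : QGH α S) (w : W) :
    deltaFn α S q w = single q w :=
  rfl

open scoped Classical in
theorem pushforward_transl_deltaFn (hS : IsSubInvSemigroup S) (g : G)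
    (h : {z : F α // z ∈ GH α S}) :
    pushforward (transl α hS g) (deltaFn α S (QGHmk α S h) (1 : ℂ)) =
      if hgh : ιG α g * h.1 ∈ GH α S then deltaFn α S (QGHmk α S ⟨ιG α g * h.1, hgh⟩) (1 : ℂ)
      else 0 := by
  rw [deltaFn_eq_single, pushforward_single]
  change (translFun α hS g (QGHmk α S h)).elim 0 _ = _
  rw [translFun_mk]
  split_ifs <;> rfl

end Quotient

open scoped Classical in
theorem c0_quotient_is_G_algebra_general
    {G : Type*} [InverseSemigroup G]
    {A : Type*} [NonUnitalNormedRing A] [StarRing A] [NormedSpace ℂ A]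
    (α : G → A →⋆ₙₐ[ℂ] A)
    (S : Set G) (hS : IsSubInvSemigroup S) :
    (∀ (h h' : F α), h ∈ GH α S → h' ∈ GH α S → equivH α S h h' → ∀ g : G,
      ((ιG α g * h ∈ GH α S) ↔ (ιG α g * h' ∈ GH α S)) ∧
      (ιG α g * h ∈ GH α S → equivH α S (ιG α g * h) (ιG α g * h'))) ∧
    ∃ β : G → (C₀(QGH α S, ℂ) →⋆ₙₐ[ℂ] C₀(QGH α S, ℂ)),
      (∀ g : G, Continuous (β g)) ∧
      (∀ (g : G) (h : {z : F α // z ∈ GH α S}),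
        β g (deltaFn α S (QGHmk α S h) (1 : ℂ)) =
          if hgh : ιG α g * h.1 ∈ GH α S then
            deltaFn α S (QGHmk α S ⟨ιG α g * h.1, hgh⟩) (1 : ℂ)
          else 0) ∧
      (∀ (g : G) (γ : C₀(QGH α S, ℂ) →⋆ₙₐ[ℂ] C₀(QGH α S, ℂ)), Continuous γ →
        (∀ h : {z : F α // z ∈ GH α S},
          γ (deltaFn α S (QGHmk α S h) (1 : ℂ)) =
            if hgh : ιG α g * h.1 ∈ GH α S then
              deltaFn α S (QGHmk α S ⟨ιG α g * h.1, hgh⟩) (1 : ℂ)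
            else 0) →
        γ = β g) ∧
      (∀ g g' : G, β (g * g') = (β g).comp (β g')) ∧
      (∀ (g : G) (x y : C₀(QGH α S, ℂ)),
        β (g * star g) x * y = x * β (g * star g) y) := by
  refine ⟨fun h h' hh hh' he g => ⟨ιG_mul_mem_GH_iff_of_equivH hS g hh hh' he,
      fun _ => he.ιG_mul g⟩,
    fun g => pushforward (transl α hS g), fun g => continuous_pushforward _,
    pushforward_transl_deltaFn α hS, fun g γ hγ hγδ => ?_,
    fun g g' => (congrArg pushforward (transl_mul α hS g g')).trans (pushforward_trans _ _),
    fun g => pushforward_mul_comm_of_le_refl (transl_mul_star_self_le α hS g)⟩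
  refine ext_of_single hγ (continuous_pushforward _) fun q => ?_
  obtain ⟨h, rfl⟩ := QGHmk_surjective α q
  rw [← deltaFn_eq_single, hγδ h, pushforward_transl_deltaFn]

open scoped Classical in
/-- Let `G` be an inverse semigroup, `H' = S ⊆ G` a finite
sub-inverse semigroup and `A` a `G`-algebra; let `c₀(G_H/H)` be the C*-algebra of
complex-valued functions on the discrete set `G_H/H` vanishing at infinity and `δ_[h]`
the characteristic function of the class of `h ∈ G_H`.  Then:
(1) if `h ≡ h'` in `G_H` and `g ∈ G`, then `g·h ∈ G_H ↔ g·h' ∈ G_H`, and in that case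
    `g·h ≡ g·h'`;
(2) for each `g ∈ G` there is a unique bounded *-endomorphism `β_g` of `c₀(G_H/H)` with
    `β_g(δ_[h]) = [g·h ∈ G_H]·δ_[g·h]` for all `h ∈ G_H`;
(3) `g ↦ β_g` is a semigroup homomorphism and `β_{g g*}(x)·y = x·β_{g g*}(y)` for all
    `x, y ∈ c₀(G_H/H)`, i.e. it makes `c₀(G_H/H)` a `G`-algebra. -/
theorem c0_quotient_is_G_algebra
    {G : Type*} [InverseSemigroup G]
    {A : Type*} [NonUnitalNormedRing A] [StarRing A] [CStarRing A] [NormedSpace ℂ A]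
    [IsScalarTower ℂ A A] [SMulCommClass ℂ A A] [StarModule ℂ A] [CompleteSpace A]
    (α : G → A →⋆ₙₐ[ℂ] A) (hα : IsGAlgebra α)
    (S : Set G) (hS : IsSubInvSemigroup S) (hSfin : S.Finite) :
    (∀ (h h' : F α), h ∈ GH α S → h' ∈ GH α S → equivH α S h h' → ∀ g : G,
      ((ιG α g * h ∈ GH α S) ↔ (ιG α g * h' ∈ GH α S)) ∧
      (ιG α g * h ∈ GH α S → equivH α S (ιG α g * h) (ιG α g * h'))) ∧
    ∃ β : G → (C₀(QGH α S, ℂ) →⋆ₙₐ[ℂ] C₀(QGH α S, ℂ)),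
      (∀ g : G, Continuous (β g)) ∧
      (∀ (g : G) (h : {z : F α // z ∈ GH α S}),
        β g (deltaFn α S (QGHmk α S h) (1 : ℂ)) =
          if hgh : ιG α g * h.1 ∈ GH α S then
            deltaFn α S (QGHmk α S ⟨ιG α g * h.1, hgh⟩) (1 : ℂ)
          else 0) ∧
      (∀ (g : G) (γ : C₀(QGH α S, ℂ) →⋆ₙₐ[ℂ] C₀(QGH α S, ℂ)), Continuous γ →
        (∀ h : {z : F α // z ∈ GH α S},
          γ (deltaFn α S (QGHmk α S h) (1 : ℂ)) =
            if hgh : ιG α g * h.1 ∈ GH α S then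
              deltaFn α S (QGHmk α S ⟨ιG α g * h.1, hgh⟩) (1 : ℂ)
            else 0) →
        γ = β g) ∧
      (∀ g g' : G, β (g * g') = (β g).comp (β g')) ∧
      (∀ (g : G) (x y : C₀(QGH α S, ℂ)),
        β (g * star g) x * y = x * β (g * star g) y) :=
  c0_quotient_is_G_algebra_general α S hS

end Green
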